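/- arXiv:1812.01862 — 3 statements merged into one kernel-verified Lean document; each statement's English description precedes it below -/
import Mathlib

section
/- Let κ : ℝ² × ℝ → ℝ be continuous and nonnegative, let μ : [0,∞) → ℝ be continuous, and let f : [0,∞) × ℝ² → ℝ be such that for every k ∈ ℝ² the map t ↦ f(t,k) is differentiable and satisfies the spatially homogeneous BGK equation ∂f/∂t(t,k) = κ(k, μ(t)) · ( F(ε(k), μ(t)) − f(t,k) ) for all t ≥ 0. If 0 ≤ f(0,k) ≤ 1 for all k ∈ ℝ², then 0 ≤ f(t,k) ≤ 1 for all (t,k) ∈ [0,∞) × ℝ² (Pauli exclusion principle is preserved). -/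
/-- The Fermi–Dirac distribution `F(ε,μ) = 1/(1 + exp((ε − μ)/k_BT))`. -/
noncomputable def fermiDirac (kBT ε μ : ℝ) : ℝ :=
  1 / (1 + Real.exp ((ε - μ) / kBT))

/-- If `g(0) ≤ 1` and `g' ≤ 0` wherever `g ≥ 1`, then `g ≤ 1` on `[0,∞)`. -/
lemma stay_le (g g' : ℝ → ℝ)
    (hg : ∀ t ∈ Set.Ici (0:ℝ), HasDerivWithinAt g (g' t) (Set.Ici 0) t)
    (h0 : g 0 ≤ 1)
    (hd : ∀ t ∈ Set.Ici (0:ℝ), 1 ≤ g t → g' t ≤ 0) :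
    ∀ t ∈ Set.Ici (0:ℝ), g t ≤ 1 := by
  intro t0 ht0
  by_contra hlt
  push_neg at hlt
  have hcont : ContinuousOn g (Set.Ici 0) := fun x hx => (hg x hx).continuousWithinAt
  have hcont' : ContinuousOn g (Set.Icc 0 t0) := hcont.mono Set.Icc_subset_Ici_self
  set S := Set.Icc (0:ℝ) t0 ∩ g ⁻¹' Set.Iic 1 with hSdef
  have hS0 : (0:ℝ) ∈ S := ⟨⟨le_refl 0, ht0⟩, h0⟩
  have hSbdd : BddAbove S := ⟨t0, fun x hx => hx.1.2⟩
  have hSclosed : IsClosed S :=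
    hcont'.preimage_isClosed_of_isClosed isClosed_Icc isClosed_Iic
  set s := sSup S with hs
  have hsS : s ∈ S := hSclosed.csSup_mem ⟨0, hS0⟩ hSbdd
  have hs0 : 0 ≤ s := hsS.1.1
  have hst0 : s ≤ t0 := hsS.1.2
  have hgs : g s ≤ 1 := hsS.2
  have hslt : s < t0 := lt_of_le_of_ne hst0 (by intro h; rw [h] at hgs; linarith)
  have hgt : ∀ x ∈ Set.Ioo s t0, 1 < g x := by
    intro x hx
    refine lt_of_not_ge fun h => ?_
    have hxS : x ∈ S := ⟨⟨le_trans hs0 hx.1.le, hx.2.le⟩, h⟩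
    exact absurd (le_csSup hSbdd hxS) (not_le.2 hx.1)
  have hderiv : ∀ x ∈ Set.Ioo s t0, HasDerivAt g (g' x) x := by
    intro x hx
    have hx0 : 0 < x := lt_of_le_of_lt hs0 hx.1
    exact (hg x hx0.le).hasDerivAt (Ici_mem_nhds hx0)
  have hanti : AntitoneOn g (Set.Icc s t0) := by
    apply antitoneOn_of_deriv_nonpos (convex_Icc s t0)
      (hcont.mono (fun x hx => le_trans hs0 hx.1))
    · intro x hx
      rw [interior_Icc] at hx
      exact (hderiv x hx).differentiableAt.differentiableWithinAt
    · intro x hx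
      rw [interior_Icc] at hx
      rw [(hderiv x hx).deriv]
      exact hd x (le_trans hs0 hx.1.le) (hgt x hx).le
  have : g t0 ≤ g s :=
    hanti ⟨le_refl s, hslt.le⟩ ⟨hslt.le, le_refl t0⟩ hslt.le
  linarith

/-- **Pauli exclusion principle is preserved (spatially homogeneous BGK).**
With `ε(k) = ħv_F·|k|`, a collision frequency `κ : ℝ² × ℝ → ℝ` that is continuous
and nonnegative, a continuous chemical potential `μ : [0,∞) → ℝ`, and `f` solving
`∂f/∂t(t,k) = κ(k, μ(t))·(F(ε(k), μ(t)) − f(t,k))` for `t ≥ 0`, if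
`0 ≤ f(0,k) ≤ 1` for all `k`, then `0 ≤ f(t,k) ≤ 1` for all `t ≥ 0` and all `k`. -/
theorem bgk_pauli_exclusion
    (kBT hvF : ℝ) (hkBT : 0 < kBT) (hhvF : 0 < hvF)
    (κ : EuclideanSpace ℝ (Fin 2) × ℝ → ℝ)
    (hκcont : Continuous κ) (hκnonneg : ∀ p, 0 ≤ κ p)
    (μ : ℝ → ℝ) (hμcont : ContinuousOn μ (Set.Ici 0))
    (f : ℝ → EuclideanSpace ℝ (Fin 2) → ℝ)
    (hf : ∀ k : EuclideanSpace ℝ (Fin 2), ∀ t ∈ Set.Ici (0 : ℝ),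
      HasDerivWithinAt (fun s => f s k)
        (κ (k, μ t) * (fermiDirac kBT (hvF * ‖k‖) (μ t) - f t k)) (Set.Ici 0) t)
    (hf0 : ∀ k, 0 ≤ f 0 k ∧ f 0 k ≤ 1) :
    ∀ t ∈ Set.Ici (0 : ℝ), ∀ k, 0 ≤ f t k ∧ f t k ≤ 1 := by
  intro t ht k
  have hF : ∀ m : ℝ, 0 < fermiDirac kBT (hvF * ‖k‖) m ∧ fermiDirac kBT (hvF * ‖k‖) m < 1 := by
    intro m
    unfold fermiDirac
    have he : 0 < Real.exp ((hvF * ‖k‖ - m) / kBT) := Real.exp_pos _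
    constructor
    · positivity
    · rw [div_lt_one (by linarith)]; linarith
  set g' : ℝ → ℝ := fun s => κ (k, μ s) * (fermiDirac kBT (hvF * ‖k‖) (μ s) - f s k) with hg'
  constructor
  · -- lower bound via stay_le applied to 1 - f
    have := stay_le (fun s => 1 - f s k) (fun s => -g' s)
      (fun u hu => (hf k u hu).const_sub 1)
      (by have := (hf0 k).1; linarith)
      (by
        intro u hu h1
        have h1' : 1 ≤ 1 - f u k := h1
        have hfu : f u k ≤ 0 := by linarith
        have hF1 := (hF (μ u)).1
        have hκ := hκnonneg (k, μ u)
        show -(κ (k, μ u) * (fermiDirac kBT (hvF * ‖k‖) (μ u) - f u k)) ≤ 0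
        nlinarith) t ht
    have h2 : 1 - f t k ≤ 1 := this
    linarith
  · exact stay_le (fun s => f s k) g' (hf k) (hf0 k).2
      (by
        intro u hu h1
        have := (hF (μ u)).2
        exact mul_nonpos_of_nonneg_of_nonpos (hκnonneg (k, μ u)) (by linarith)) t ht
end

section
/- Fix a ≥ 0, b ≥ 0, ε ≥ 0 with ε + b > 0, and φ ∈ [0,1]. Then the map ξ ↦ λ(ε,ξ;a,b;φ) is strictly decreasing on (0,∞); equivalently, the map μ ↦ λ(ε, exp(−μ/k_BT); a,b; φ) is strictly increasing on ℝ. -/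
/-- `ψ(ε,ξ;a,b) = (a+1)(ε+b)/(1 + ξ·e^{(ε+b)/k_BT}) + a[ε−b]₊/(1 + ξ·e^{[ε−b]₊/k_BT})`. -/
noncomputable def psi (kBT ε ξ a b : ℝ) : ℝ :=
  (a + 1) * (ε + b) / (1 + ξ * Real.exp ((ε + b) / kBT)) +
    a * max (ε - b) 0 / (1 + ξ * Real.exp (max (ε - b) 0 / kBT))

/-- `λ(ε,ξ;a,b;φ) = ψ(ε,ξ;a,b)·(1 − φ·(1 + ξ·e^{ε/k_BT}))`. -/
noncomputable def lam (kBT ε ξ a b φ : ℝ) : ℝ :=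
  psi kBT ε ξ a b * (1 - φ * (1 + ξ * Real.exp (ε / kBT)))

lemma comb_pos (E Ei φ : ℝ) (hE : 0 < E) (hEi : 0 < Ei) (hφ0 : 0 ≤ φ) (hφ1 : φ ≤ 1) :
    0 < (1 - φ) * Ei + φ * E := by
  rcases le_or_gt φ (1/2) with h | h
  · nlinarith
  · nlinarith

lemma term_lt (E Ei φ c ξ₁ ξ₂ : ℝ) (hE : 0 < E) (hEi : 0 < Ei)
    (hφ0 : 0 ≤ φ) (hφ1 : φ ≤ 1) (hc : 0 < c) (h1 : 0 < ξ₁) (h12 : ξ₁ < ξ₂) :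
    c * (1 - φ * (1 + ξ₂ * E)) / (1 + ξ₂ * Ei) <
      c * (1 - φ * (1 + ξ₁ * E)) / (1 + ξ₁ * Ei) := by
  have hd1 : 0 < 1 + ξ₁ * Ei := by positivity
  have hd2 : 0 < 1 + ξ₂ * Ei := by nlinarith
  rw [div_lt_div_iff₀ hd2 hd1]
  nlinarith [mul_pos hc (mul_pos (sub_pos.2 h12) (comb_pos E Ei φ hE hEi hφ0 hφ1))]

lemma term_le (E Ei φ c ξ₁ ξ₂ : ℝ) (hE : 0 < E) (hEi : 0 < Ei)
    (hφ0 : 0 ≤ φ) (hφ1 : φ ≤ 1) (hc : 0 ≤ c) (h1 : 0 < ξ₁) (h12 : ξ₁ < ξ₂) :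
    c * (1 - φ * (1 + ξ₂ * E)) / (1 + ξ₂ * Ei) ≤
      c * (1 - φ * (1 + ξ₁ * E)) / (1 + ξ₁ * Ei) := by
  rcases eq_or_lt_of_le hc with h | h
  · simp [← h]
  · exact (term_lt E Ei φ c ξ₁ ξ₂ hE hEi hφ0 hφ1 h h1 h12).le

/-- **Monotonicity of the BGK term.** For `a ≥ 0`, `b ≥ 0`, `ε ≥ 0` with `ε + b > 0`
and `φ ∈ [0,1]`, the map `ξ ↦ λ(ε,ξ;a,b;φ)` is strictly decreasing on `(0,∞)`;
equivalently, `μ ↦ λ(ε, exp(−μ/k_BT); a,b; φ)` is strictly increasing on `ℝ`. -/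
theorem lam_strictAntiOn_and_strictMono
    (kBT : ℝ) (hkBT : 0 < kBT)
    (a b ε φ : ℝ) (ha : 0 ≤ a) (hb : 0 ≤ b) (hε : 0 ≤ ε) (hεb : 0 < ε + b)
    (hφ0 : 0 ≤ φ) (hφ1 : φ ≤ 1) :
    StrictAntiOn (fun ξ => lam kBT ε ξ a b φ) (Set.Ioi 0) ∧
      StrictMono (fun μ => lam kBT ε (Real.exp (-μ / kBT)) a b φ) := by
  have hE : 0 < Real.exp (ε / kBT) := Real.exp_pos _
  have hE1 : 0 < Real.exp ((ε + b) / kBT) := Real.exp_pos _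
  have hE2 : 0 < Real.exp (max (ε - b) 0 / kBT) := Real.exp_pos _
  have hc1 : 0 < (a + 1) * (ε + b) := by positivity
  have hc2 : 0 ≤ a * max (ε - b) 0 := mul_nonneg ha (le_max_right _ _)
  have key : StrictAntiOn (fun ξ => lam kBT ε ξ a b φ) (Set.Ioi 0) := by
    intro ξ₁ hξ₁ ξ₂ hξ₂ h12
    have hξ₁' : (0:ℝ) < ξ₁ := hξ₁
    have rw1 : ∀ ξ : ℝ, lam kBT ε ξ a b φ =
        (a + 1) * (ε + b) * (1 - φ * (1 + ξ * Real.exp (ε / kBT))) /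
          (1 + ξ * Real.exp ((ε + b) / kBT)) +
        a * max (ε - b) 0 * (1 - φ * (1 + ξ * Real.exp (ε / kBT))) /
          (1 + ξ * Real.exp (max (ε - b) 0 / kBT)) := by
      intro ξ
      unfold lam psi
      ring
    simp only [rw1]
    have t1 := term_lt (Real.exp (ε / kBT)) (Real.exp ((ε + b) / kBT)) φ
      ((a + 1) * (ε + b)) ξ₁ ξ₂ hE hE1 hφ0 hφ1 hc1 hξ₁' h12
    have t2 := term_le (Real.exp (ε / kBT)) (Real.exp (max (ε - b) 0 / kBT)) φ
      (a * max (ε - b) 0) ξ₁ ξ₂ hE hE2 hφ0 hφ1 hc2 hξ₁' h12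
    exact add_lt_add_of_lt_of_le t1 t2
  refine ⟨key, ?_⟩
  intro μ₁ μ₂ h
  have hlt : Real.exp (-μ₂ / kBT) < Real.exp (-μ₁ / kBT) := by
    apply Real.exp_lt_exp.2
    exact div_lt_div_of_pos_right (by linarith) hkBT
  exact key (Set.mem_Ioi.2 (Real.exp_pos _)) (Set.mem_Ioi.2 (Real.exp_pos _)) hlt
end

section
/- Fix a ≥ 0, b ≥ 0, set β = exp(b/k_BT), and let f : ℝ² → ℝ be measurable with 0 ≤ f(k) ≤ 1 for all k and such that k ↦ ε(k)·f(k) is integrable over ℝ². Then lim_{ξ → +∞} ∫_{ℝ²} λ(ε(k), ξ; a, b; f(k)) dk = − ∫_{ℝ²} [ (a+1)(ε(k)+b)·β⁻¹ + a·β·[ε(k)−b]₊ ] · f(k) dk; in particular, if f is not almost everywhere equal to 0, this limit is strictly negative. -/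
/-!
With `β = e^{b/k_BT}`, `E₁ = e^{(ε+b)/k_BT}` and `E₂ = e^{[ε−b]₊/k_BT}` one has
`e^{ε/k_BT} = β⁻¹E₁` and `[ε−b]₊·e^{ε/k_BT} = β[ε−b]₊·E₂`, so that
`λ = ψ(1 − φ) − φ·ψξe^{ε/k_BT}` with
`ψξe^{ε/k_BT} = (a+1)(ε+b)β⁻¹·ξE₁/(1+ξE₁) + aβ[ε−b]₊·ξE₂/(1+ξE₂)`.
As `ξ → ∞`, `ψ → 0` and both fractions `ξEᵢ/(1+ξEᵢ)` tend to `1`, which gives the pointwise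
limit `−L(ε)·φ` with `L(ε) = (a+1)(ε+b)β⁻¹ + aβ[ε−b]₊`. Since these fractions are at most `1`,
`|λ| ≤ ψ + L(ε)·φ`. For `ξ ≥ 1`, `ψ ≤ ((a+1)(ε+b) + aβε)e^{-ε/k_BT}` decays exponentially in
`|k|`, and `L(ε(k))·f(k)` is integrable because `f` and `εf` are, so dominated convergence gives
the limit. As `L(ε(k)) > 0` for `k ≠ 0`, the integral of `L(ε(k))·f(k)` is positive unless
`f = 0` almost everywhere.
-/

open MeasureTheory Filter Topology Real

noncomputable def lamLimitCoeff (kBT ε a b : ℝ) : ℝ :=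
  (a + 1) * (ε + b) * (exp (b / kBT))⁻¹ + a * exp (b / kBT) * max (ε - b) 0

section Pointwise

variable {kBT ε ξ a b φ : ℝ}

lemma tendsto_div_one_add_mul_atTop_zero (A : ℝ) {c : ℝ} (hc : 0 < c) :
    Tendsto (fun ξ : ℝ => A / (1 + ξ * c)) atTop (𝓝 0) := by
  have h : Tendsto (fun ξ : ℝ => 1 + ξ * c) atTop atTop :=
    tendsto_atTop_add_const_left _ 1 (tendsto_id.atTop_mul_const hc)
  simpa [div_eq_mul_inv] using h.inv_tendsto_atTop.const_mul A

lemma tendsto_mul_div_one_add_mul_atTop_one {c : ℝ} (hc : 0 < c) :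
    Tendsto (fun ξ : ℝ => ξ * c / (1 + ξ * c)) atTop (𝓝 1) := by
  have h := (tendsto_div_one_add_mul_atTop_zero 1 hc).const_sub 1
  rw [sub_zero] at h
  refine h.congr' ?_
  filter_upwards [eventually_ge_atTop 0] with ξ hξ
  field_simp
  ring

lemma mul_div_one_add_mul_le_one {c : ℝ} (hξ : 0 ≤ ξ) (hc : 0 ≤ c) :
    ξ * c / (1 + ξ * c) ≤ 1 :=
  div_le_one_of_le₀ (by linarith) (by positivity)

lemma exp_div_eq_inv_mul_exp_add_div :
    exp (ε / kBT) = (exp (b / kBT))⁻¹ * exp ((ε + b) / kBT) := by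
  rw [add_div, exp_add]
  field_simp

lemma max_sub_zero_mul_exp_div :
    max (ε - b) 0 * exp (ε / kBT) =
      max (ε - b) 0 * (exp (b / kBT) * exp (max (ε - b) 0 / kBT)) := by
  rcases le_total ε b with h | h
  · simp [max_eq_right (sub_nonpos.2 h)]
  · rw [max_eq_left (sub_nonneg.2 h), ← exp_add, ← add_div, add_sub_cancel]

lemma psi_mul_mul_exp : psi kBT ε ξ a b * (ξ * exp (ε / kBT)) =
    (a + 1) * (ε + b) * (exp (b / kBT))⁻¹ *
        (ξ * exp ((ε + b) / kBT) / (1 + ξ * exp ((ε + b) / kBT))) +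
      a * exp (b / kBT) * max (ε - b) 0 *
        (ξ * exp (max (ε - b) 0 / kBT) / (1 + ξ * exp (max (ε - b) 0 / kBT))) := by
  rw [psi]
  linear_combination
    ((a + 1) * (ε + b) * ξ / (1 + ξ * exp ((ε + b) / kBT))) *
        exp_div_eq_inv_mul_exp_add_div (ε := ε) (b := b) (kBT := kBT) +
      (a * ξ / (1 + ξ * exp (max (ε - b) 0 / kBT))) *
        max_sub_zero_mul_exp_div (ε := ε) (b := b) (kBT := kBT)

lemma lam_eq_psi_mul_sub : lam kBT ε ξ a b φ =
    psi kBT ε ξ a b * (1 - φ) - φ * (psi kBT ε ξ a b * (ξ * exp (ε / kBT))) := by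
  rw [lam]
  ring

lemma tendsto_psi_atTop : Tendsto (fun ξ => psi kBT ε ξ a b) atTop (𝓝 0) := by
  simpa only [psi, add_zero] using (tendsto_div_one_add_mul_atTop_zero _ (exp_pos _)).add
    (tendsto_div_one_add_mul_atTop_zero _ (exp_pos _))

lemma tendsto_psi_mul_mul_exp_atTop :
    Tendsto (fun ξ => psi kBT ε ξ a b * (ξ * exp (ε / kBT))) atTop
      (𝓝 (lamLimitCoeff kBT ε a b)) := by
  simp_rw [psi_mul_mul_exp]
  simpa [lamLimitCoeff] using
    ((tendsto_mul_div_one_add_mul_atTop_one (exp_pos _)).const_mul _).add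
      ((tendsto_mul_div_one_add_mul_atTop_one (exp_pos _)).const_mul _)

lemma tendsto_lam_atTop :
    Tendsto (fun ξ => lam kBT ε ξ a b φ) atTop (𝓝 (-(lamLimitCoeff kBT ε a b * φ))) := by
  simp_rw [lam_eq_psi_mul_sub]
  simpa [mul_comm] using
    (tendsto_psi_atTop.mul_const (1 - φ)).sub (tendsto_psi_mul_mul_exp_atTop.const_mul φ)

lemma psi_nonneg (ha : 0 ≤ a) (hb : 0 ≤ b) (hε : 0 ≤ ε) (hξ : 0 ≤ ξ) :
    0 ≤ psi kBT ε ξ a b := by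
  unfold psi
  positivity

lemma psi_mul_mul_exp_le (ha : 0 ≤ a) (hb : 0 ≤ b) (hε : 0 ≤ ε) (hξ : 0 ≤ ξ) :
    psi kBT ε ξ a b * (ξ * exp (ε / kBT)) ≤ lamLimitCoeff kBT ε a b := by
  rw [psi_mul_mul_exp, lamLimitCoeff]
  exact add_le_add
    (mul_le_of_le_one_right (by positivity) (mul_div_one_add_mul_le_one hξ (exp_pos _).le))
    (mul_le_of_le_one_right (by positivity) (mul_div_one_add_mul_le_one hξ (exp_pos _).le))

lemma abs_lam_le (ha : 0 ≤ a) (hb : 0 ≤ b) (hε : 0 ≤ ε) (hξ : 0 ≤ ξ) (hφ0 : 0 ≤ φ)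
    (hφ1 : φ ≤ 1) :
    |lam kBT ε ξ a b φ| ≤ psi kBT ε ξ a b + lamLimitCoeff kBT ε a b * φ := by
  have hψ := psi_nonneg (kBT := kBT) ha hb hε hξ
  have hP : 0 ≤ psi kBT ε ξ a b * (ξ * exp (ε / kBT)) := by positivity
  have hPL := mul_le_mul_of_nonneg_left (psi_mul_mul_exp_le (kBT := kBT) ha hb hε hξ) hφ0
  rw [lam_eq_psi_mul_sub, abs_le]
  constructor <;> nlinarith [mul_nonneg hψ hφ0, mul_nonneg hφ0 hP]

lemma div_one_add_mul_exp_le {y z : ℝ} (hy : 0 ≤ y) (hξ : 1 ≤ ξ) :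
    y / (1 + ξ * exp z) ≤ y * exp (-z) := by
  rw [exp_neg, ← div_eq_mul_inv]
  exact div_le_div_of_nonneg_left hy (exp_pos z) (by nlinarith [exp_pos z])

lemma psi_le_mul_exp_neg (hkBT : 0 ≤ kBT) (ha : 0 ≤ a) (hb : 0 ≤ b) (hε : 0 ≤ ε) (hξ : 1 ≤ ξ) :
    psi kBT ε ξ a b ≤ ((a + 1) * (ε + b) + a * exp (b / kBT) * ε) * exp (-(ε / kBT)) := by
  have hm : 0 ≤ max (ε - b) 0 := le_max_right _ _
  have h₁ : exp (-((ε + b) / kBT)) ≤ exp (-(ε / kBT)) := by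
    gcongr
    linarith
  have h₂ : exp (-(max (ε - b) 0 / kBT)) ≤ exp (b / kBT) * exp (-(ε / kBT)) := by
    rw [← exp_add, ← neg_div, ← neg_div, ← add_div]
    gcongr
    linarith [le_max_left (ε - b) 0]
  calc psi kBT ε ξ a b
      ≤ (a + 1) * (ε + b) * exp (-((ε + b) / kBT)) +
          a * max (ε - b) 0 * exp (-(max (ε - b) 0 / kBT)) :=
        add_le_add (div_one_add_mul_exp_le (by positivity) hξ)
          (div_one_add_mul_exp_le (by positivity) hξ)
    _ ≤ (a + 1) * (ε + b) * exp (-(ε / kBT)) + a * ε * (exp (b / kBT) * exp (-(ε / kBT))) := by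
        gcongr
        exact max_le (by linarith) hε
    _ = _ := by ring

lemma lamLimitCoeff_pos (ha : 0 ≤ a) (h : 0 < ε + b) : 0 < lamLimitCoeff kBT ε a b := by
  unfold lamLimitCoeff
  positivity

lemma lamLimitCoeff_nonneg (ha : 0 ≤ a) (hb : 0 ≤ b) (hε : 0 ≤ ε) :
    0 ≤ lamLimitCoeff kBT ε a b := by
  unfold lamLimitCoeff
  positivity

lemma lamLimitCoeff_le (ha : 0 ≤ a) (hb : 0 ≤ b) (hε : 0 ≤ ε) :
    lamLimitCoeff kBT ε a b ≤
      (a + 1) * b * (exp (b / kBT))⁻¹ + ((a + 1) * (exp (b / kBT))⁻¹ + a * exp (b / kBT)) * ε := by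
  have h := mul_le_mul_of_nonneg_left (max_le (by linarith) hε : max (ε - b) 0 ≤ ε)
    (by positivity : 0 ≤ a * exp (b / kBT))
  unfold lamLimitCoeff
  linarith

end Pointwise

section Integrability

variable {E : Type*} [NormedAddCommGroup E] [MeasurableSpace E] {μ : Measure E}

lemma integrable_of_abs_le_of_integrable_norm_mul [ProperSpace E] [OpensMeasurableSpace E]
    [IsFiniteMeasureOnCompacts μ] {g : E → ℝ} (hg : AEStronglyMeasurable g μ) {C : ℝ}
    (hC : ∀ x, |g x| ≤ C) (h : Integrable (fun x => ‖x‖ * g x) μ) : Integrable g μ := by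
  have hball : IntegrableOn g (Metric.closedBall 0 1) μ :=
    Measure.integrableOn_of_bounded measure_closedBall_lt_top.ne hg (ae_of_all _ hC)
  have hcompl : IntegrableOn g (Metric.closedBall 0 1)ᶜ μ := by
    refine h.norm.integrableOn.mono' hg.restrict
      (ae_restrict_of_forall_mem measurableSet_closedBall.compl fun x hx => ?_)
    have hx : 1 ≤ ‖x‖ := by
      simp only [Set.mem_compl_iff, Metric.mem_closedBall, dist_zero_right, not_le] at hx
      exact hx.le
    rw [Real.norm_eq_abs, norm_mul, norm_norm, Real.norm_eq_abs]
    exact le_mul_of_one_le_left (abs_nonneg _) hx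
  simpa using hball.union hcompl

variable [NormedSpace ℝ E] [FiniteDimensional ℝ E] [BorelSpace E] [μ.IsAddHaarMeasure]

lemma integrable_norm_pow_mul_exp_neg_mul_norm [Nontrivial E] (n : ℕ) {c : ℝ} (hc : 0 < c) :
    Integrable (fun x : E => ‖x‖ ^ n * exp (-(c * ‖x‖))) μ := by
  rw [integrable_fun_norm_addHaar μ (f := fun y => y ^ n * exp (-(c * y)))]
  refine (integrableOn_rpow_mul_exp_neg_mul_rpow (s := (Module.finrank ℝ E - 1 + n : ℕ))
    (neg_one_lt_zero.trans_le (Nat.cast_nonneg _)) one_pos hc).congr_fun (fun y _ => ?_)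
    measurableSet_Ioi
  simp only [rpow_natCast, rpow_one, pow_add, smul_eq_mul, neg_mul, mul_assoc]

end Integrability

section Integral

variable {E : Type*} [NormedAddCommGroup E] [NormedSpace ℝ E] [FiniteDimensional ℝ E]
  [MeasurableSpace E] [BorelSpace E] {μ : Measure E} [μ.IsAddHaarMeasure]
  {kBT hvF a b : ℝ} {f : E → ℝ}

lemma integrable_lamLimitCoeff_mul (ha : 0 ≤ a) (hb : 0 ≤ b) (hhvF : 0 < hvF)
    (hfmeas : Measurable f) (hf01 : ∀ k, 0 ≤ f k ∧ f k ≤ 1)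
    (hint : Integrable (fun k => hvF * ‖k‖ * f k) μ) :
    Integrable (fun k => lamLimitCoeff kBT (hvF * ‖k‖) a b * f k) μ := by
  have hf : Integrable f μ := by
    refine integrable_of_abs_le_of_integrable_norm_mul hfmeas.aestronglyMeasurable
      (fun k => abs_le.2 ⟨by linarith [(hf01 k).1], (hf01 k).2⟩) ?_
    refine (hint.const_mul hvF⁻¹).congr (ae_of_all _ fun k => ?_)
    field_simp
  refine ((hf.const_mul ((a + 1) * b * (exp (b / kBT))⁻¹)).add
    (hint.const_mul ((a + 1) * (exp (b / kBT))⁻¹ + a * exp (b / kBT)))).mono' ?_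
    (ae_of_all _ fun k => ?_)
  · exact Measurable.aestronglyMeasurable (by unfold lamLimitCoeff; fun_prop)
  have hε : 0 ≤ hvF * ‖k‖ := by positivity
  rw [Real.norm_eq_abs, abs_of_nonneg (mul_nonneg (lamLimitCoeff_nonneg ha hb hε) (hf01 k).1)]
  exact (mul_le_mul_of_nonneg_right (lamLimitCoeff_le ha hb hε) (hf01 k).1).trans_eq
    (by simp only [Pi.add_apply]; ring)

lemma integrable_psi_majorant (hkBT : 0 < kBT) (hhvF : 0 < hvF) [Nontrivial E] :
    Integrable (fun k : E => ((a + 1) * (hvF * ‖k‖ + b) + a * exp (b / kBT) * (hvF * ‖k‖)) *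
      exp (-(hvF * ‖k‖ / kBT))) μ := by
  have hc : 0 < hvF / kBT := div_pos hhvF hkBT
  refine (((integrable_norm_pow_mul_exp_neg_mul_norm (μ := μ) 0 hc).const_mul ((a + 1) * b)).add
    ((integrable_norm_pow_mul_exp_neg_mul_norm (μ := μ) 1 hc).const_mul
      (((a + 1) + a * exp (b / kBT)) * hvF))).congr (ae_of_all _ fun k => ?_)
  simp only [Pi.add_apply, pow_zero, pow_one, mul_div_right_comm hvF]
  ring

theorem tendsto_integral_lam_atTop [Nontrivial E] (hkBT : 0 < kBT) (hhvF : 0 < hvF) (ha : 0 ≤ a)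
    (hb : 0 ≤ b) (hfmeas : Measurable f) (hf01 : ∀ k, 0 ≤ f k ∧ f k ≤ 1)
    (hLf : Integrable (fun k => lamLimitCoeff kBT (hvF * ‖k‖) a b * f k) μ) :
    Tendsto (fun ξ => ∫ k, lam kBT (hvF * ‖k‖) ξ a b (f k) ∂μ) atTop
      (𝓝 (-∫ k, lamLimitCoeff kBT (hvF * ‖k‖) a b * f k ∂μ)) := by
  rw [← integral_neg]
  refine tendsto_integral_filter_of_dominated_convergence _
    (Eventually.of_forall fun ξ =>
      (by unfold lam psi; fun_prop : Measurable _).aestronglyMeasurable)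
    ?_ ((integrable_psi_majorant (a := a) (b := b) hkBT hhvF).add hLf)
    (ae_of_all _ fun k => tendsto_lam_atTop)
  filter_upwards [eventually_ge_atTop 1] with ξ hξ
  refine ae_of_all _ fun k => ?_
  have hε : 0 ≤ hvF * ‖k‖ := by positivity
  exact (abs_lam_le ha hb hε (zero_le_one.trans hξ) (hf01 k).1 (hf01 k).2).trans
    (add_le_add (psi_le_mul_exp_neg hkBT.le ha hb hε hξ) le_rfl)

lemma integral_lamLimitCoeff_mul_pos [Nontrivial E] (ha : 0 ≤ a) (hb : 0 ≤ b) (hhvF : 0 < hvF)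
    (hf0 : ∀ k, 0 ≤ f k) (hLf : Integrable (fun k => lamLimitCoeff kBT (hvF * ‖k‖) a b * f k) μ)
    (hne : ¬ f =ᵐ[μ] 0) :
    0 < ∫ k, lamLimitCoeff kBT (hvF * ‖k‖) a b * f k ∂μ := by
  have hpos : ∀ k ≠ (0 : E), 0 < lamLimitCoeff kBT (hvF * ‖k‖) a b := fun k hk =>
    lamLimitCoeff_pos ha (by have := norm_pos_iff.2 hk; positivity)
  have hnn : 0 ≤ fun k => lamLimitCoeff kBT (hvF * ‖k‖) a b * f k := fun k =>
    mul_nonneg (lamLimitCoeff_nonneg ha hb (by positivity)) (hf0 k)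
  refine (integral_nonneg hnn).lt_of_ne fun h => hne ?_
  filter_upwards [(integral_eq_zero_iff_of_nonneg hnn hLf).1 h.symm, Measure.ae_ne μ 0]
    with k hk hk0
  exact (mul_eq_zero.1 hk).resolve_left (hpos k hk0).ne'

end Integral

/-- **Limit of the collision integral as `ξ → +∞` (i.e. `μ → −∞`).**
With `ε(k) = ħv_F·|k|` and `β = exp(b/k_BT)`, for `f : ℝ² → ℝ` measurable with
values in `[0,1]` and `k ↦ ε(k)·f(k)` integrable,
`lim_{ξ → +∞} ∫ λ(ε(k),ξ;a,b;f(k)) dk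
  = −∫ [(a+1)(ε(k)+b)β⁻¹ + aβ[ε(k)−b]₊]·f(k) dk`,
and this limit is strictly negative whenever `f` is not almost everywhere `0`. -/
theorem lam_integral_tendsto_atTop_xi
    (kBT hvF : ℝ) (hkBT : 0 < kBT) (hhvF : 0 < hvF)
    (a b : ℝ) (ha : 0 ≤ a) (hb : 0 ≤ b)
    (f : EuclideanSpace ℝ (Fin 2) → ℝ) (hfmeas : Measurable f)
    (hf01 : ∀ k, 0 ≤ f k ∧ f k ≤ 1)
    (hint : Integrable (fun k => hvF * ‖k‖ * f k) volume) :
    Tendsto (fun ξ => ∫ k : EuclideanSpace ℝ (Fin 2),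
        lam kBT (hvF * ‖k‖) ξ a b (f k)) atTop
      (nhds (-∫ k : EuclideanSpace ℝ (Fin 2),
        ((a + 1) * (hvF * ‖k‖ + b) * (Real.exp (b / kBT))⁻¹ +
          a * Real.exp (b / kBT) * max (hvF * ‖k‖ - b) 0) * f k)) ∧
      (¬ (f =ᵐ[volume] 0) →
        -∫ k : EuclideanSpace ℝ (Fin 2),
          ((a + 1) * (hvF * ‖k‖ + b) * (Real.exp (b / kBT))⁻¹ +
            a * Real.exp (b / kBT) * max (hvF * ‖k‖ - b) 0) * f k < 0) := by
  have hLf := integrable_lamLimitCoeff_mul (kBT := kBT) ha hb hhvF hfmeas hf01 hint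
  exact ⟨tendsto_integral_lam_atTop hkBT hhvF ha hb hfmeas hf01 hLf, fun hne =>
    neg_neg_of_pos (integral_lamLimitCoeff_mul_pos ha hb hhvF (fun k => (hf01 k).1) hLf hne)⟩
end
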